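/- arXiv:2312.13178 — 3 statements merged into one kernel-verified Lean document; each statement's English description precedes it below -/
import Mathlib

section
/- For any integers ℓ, d ≥ 1, there exists a set A ⊆ [ℓ]^d of vectors with |A| ≥ ℓ^d / (d·ℓ²) such that for every multiset of t ≥ 1 not-all-equal vectors y₁,…,y_t ∈ A, their average (1/t)·∑ᵢ yᵢ does not belong to A. -/
/-- Variance identity over ℤ. -/
lemma sum_sq_diff (t : ℕ) (a : Fin t → ℤ) :
    ∑ j, ∑ k, (a j - a k)^2 = 2*(t:ℤ)*(∑ j, (a j)^2) - 2*(∑ j, a j)^2 := by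
  have h : ∀ j k : Fin t, (a j - a k)^2 = (a j)^2 + (a k)^2 - 2*(a j * a k) := by
    intro j k; ring
  simp_rw [h, Finset.sum_sub_distrib, Finset.sum_add_distrib, Finset.sum_const,
    Finset.card_univ, Fintype.card_fin, ← Finset.mul_sum, ← Finset.sum_mul,
    nsmul_eq_mul]
  rw [← Finset.mul_sum]
  ring

/-- **Average-free sets of vectors.**
For any integers `ℓ, d ≥ 1`, there exists a set `A ⊆ [ℓ]^d` of vectors with
`|A| ≥ ℓ^d / (d·ℓ²)` such that for every multiset of `t ≥ 1` not-all-equal vectors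
`y₁,…,y_t ∈ A`, their average `(1/t)·∑ᵢ yᵢ` (computed over `ℚ`) does not belong to `A`. -/
theorem average_free_set_exists (ℓ d : ℕ) (hℓ : 1 ≤ ℓ) (hd : 1 ≤ d) :
    ∃ A : Finset (Fin d → ℤ),
      (∀ y ∈ A, ∀ i, 1 ≤ y i ∧ y i ≤ (ℓ : ℤ)) ∧
      ((ℓ : ℚ) ^ d / ((d : ℚ) * (ℓ : ℚ) ^ 2) ≤ (A.card : ℚ)) ∧
      (∀ t : ℕ, 1 ≤ t → ∀ y : Fin t → (Fin d → ℤ), (∀ j, y j ∈ A) →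
        (¬ ∀ j j', y j = y j') →
        ∀ z ∈ A, (fun i => (t : ℚ)⁻¹ * ∑ j, ((y j i : ℤ) : ℚ)) ≠ (fun i => ((z i : ℤ) : ℚ))) := by
  classical
  set S : Finset (Fin d → ℤ) := Fintype.piFinset fun _ => Finset.Icc (1:ℤ) ℓ with hS
  set f : (Fin d → ℤ) → ℤ := fun y => ∑ i, (y i)^2 with hf
  set T : Finset ℤ := Finset.Icc (d : ℤ) (d * ℓ^2) with hT
  have hmem : ∀ y ∈ S, ∀ i, 1 ≤ y i ∧ y i ≤ (ℓ : ℤ) := by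
    intro y hy i
    simp only [hS, Fintype.mem_piFinset, Finset.mem_Icc] at hy
    exact hy i
  have hmaps : ∀ y ∈ S, f y ∈ T := by
    intro y hy
    have hlow : ∀ i ∈ (Finset.univ : Finset (Fin d)), (1:ℤ) ≤ (y i)^2 := by
      intro i _; have := (hmem y hy i).1; nlinarith
    have hup : ∀ i ∈ (Finset.univ : Finset (Fin d)), (y i)^2 ≤ (ℓ:ℤ)^2 := by
      intro i _
      have h1 := (hmem y hy i).1
      have h2 := (hmem y hy i).2
      nlinarith
    have l1 := Finset.sum_le_sum hlow
    have l2 := Finset.sum_le_sum hup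
    simp only [Finset.sum_const, Finset.card_univ, Fintype.card_fin,
      nsmul_eq_mul, mul_one] at l1 l2
    simp only [hT, Finset.mem_Icc]
    exact ⟨l1, l2⟩
  have hScard : S.card = ℓ ^ d := by
    simp [hS]
  have hTcard : T.card ≤ d * ℓ^2 := by
    rw [hT, Int.card_Icc]
    have h1 : (1:ℤ) ≤ d := by exact_mod_cast hd
    have h2 : (1:ℤ) ≤ ℓ := by exact_mod_cast hℓ
    have : ((d:ℤ) * ℓ^2 + 1 - d).toNat ≤ ((d:ℤ)*ℓ^2).toNat := by
      apply Int.toNat_le_toNat; nlinarith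
    calc _ ≤ ((d:ℤ)*ℓ^2).toNat := this
    _ = d * ℓ^2 := by
      rw [show (d:ℤ)*ℓ^2 = ((d*ℓ^2 : ℕ) : ℤ) by push_cast; ring, Int.toNat_natCast]
  -- pigeonhole
  have hdl : (d:ℤ) ≤ (d:ℤ) * (ℓ:ℤ)^2 := by
    have h2 : (1:ℤ) ≤ ℓ := by exact_mod_cast hℓ
    have h3 : (0:ℤ) ≤ d := Int.natCast_nonneg d
    have h4 : (1:ℤ) ≤ (ℓ:ℤ)^2 := by nlinarith
    nlinarith [mul_le_mul_of_nonneg_left h4 h3]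
  have hTne : T.Nonempty := ⟨(d:ℤ), by simp [hT, Finset.mem_Icc, hdl]⟩
  have hsum : S.card = ∑ m ∈ T, (S.filter fun y => f y = m).card :=
    Finset.card_eq_sum_card_fiberwise hmaps
  have hpig : ∃ m ∈ T, S.card ≤ T.card * (S.filter fun y => f y = m).card := by
    by_contra hcon
    push_neg at hcon
    have : ∑ m ∈ T, (S.filter fun y => f y = m).card * T.card < ∑ m ∈ T, S.card := by
      apply Finset.sum_lt_sum_of_nonempty hTne
      intro m hm
      have := hcon m hm
      calc (S.filter fun y => f y = m).card * T.card
          = T.card * (S.filter fun y => f y = m).card := by ring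
      _ < S.card := this
    rw [← Finset.sum_mul, ← hsum, Finset.sum_const, smul_eq_mul, mul_comm] at this
    exact lt_irrefl _ this
  obtain ⟨m, hmT, hm⟩ := hpig
  set A : Finset (Fin d → ℤ) := S.filter fun y => f y = m with hA
  have hAmem : ∀ y ∈ A, y ∈ S ∧ f y = m := by
    intro y hy; simpa [hA] using hy
  refine ⟨A, ?_, ?_, ?_⟩
  · intro y hy i
    exact hmem y (hAmem y hy).1 i
  · -- cardinality bound
    have hdℓ : (0:ℚ) < (d:ℚ) * (ℓ:ℚ)^2 := by positivity
    rw [div_le_iff₀ hdℓ]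
    have h1 : (ℓ:ℚ)^d = (S.card : ℚ) := by rw [hScard]; push_cast; ring
    have h2 : (S.card : ℚ) ≤ (T.card : ℚ) * (A.card : ℚ) := by
      exact_mod_cast hm
    have h3 : (T.card : ℚ) ≤ (d:ℚ) * (ℓ:ℚ)^2 := by exact_mod_cast hTcard
    have h4 : (0:ℚ) ≤ (A.card : ℚ) := by positivity
    calc (ℓ:ℚ)^d ≤ (T.card : ℚ) * (A.card : ℚ) := by rw [h1]; exact h2
    _ ≤ ((d:ℚ)*(ℓ:ℚ)^2) * (A.card:ℚ) := by nlinarith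
    _ = (A.card:ℚ) * ((d:ℚ)*(ℓ:ℚ)^2) := by ring
  · intro t ht y hy hne z hz heq
    have ht0 : (t:ℚ) ≠ 0 := by positivity
    -- integer identity : t * z i = ∑ j, y j i
    have hzi : ∀ i, (t:ℤ) * z i = ∑ j, y j i := by
      intro i
      have := congrFun heq i
      have hq : ((t:ℤ) * z i : ℚ) = ((∑ j, y j i : ℤ) : ℚ) := by
        push_cast
        rw [← this]
        field_simp
      exact_mod_cast hq
    have hym : ∀ j, ∑ i, (y j i)^2 = m := fun j => (hAmem _ (hy j)).2
    have hzm : ∑ i, (z i)^2 = m := (hAmem _ hz).2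
    -- key sum is zero
    have hQ : ∑ i, ∑ j, ∑ k, (y j i - y k i)^2 = 0 := by
      have hrow : ∀ i, ∑ j, ∑ k, (y j i - y k i)^2
          = 2*(t:ℤ)*(∑ j, (y j i)^2) - 2*((t:ℤ)*z i)^2 := by
        intro i
        rw [sum_sq_diff t (fun j => y j i), hzi i]
      simp_rw [hrow]
      rw [Finset.sum_sub_distrib]
      have e1 : ∑ i : Fin d, 2*(t:ℤ)*(∑ j, (y j i)^2) = 2*(t:ℤ)*((t:ℤ)*m) := by
        rw [← Finset.mul_sum, Finset.sum_comm]
        simp_rw [hym]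
        simp [mul_comm, mul_assoc]
      have e2 : ∑ i : Fin d, 2*((t:ℤ)*z i)^2 = 2*(t:ℤ)^2*m := by
        have : ∀ i : Fin d, 2*((t:ℤ)*z i)^2 = 2*(t:ℤ)^2*(z i)^2 := by intro i; ring
        simp_rw [this, ← Finset.mul_sum, hzm]
      rw [e1, e2]; ring
    -- each term is zero
    have hterm : ∀ i, ∀ j k : Fin t, (y j i - y k i)^2 = 0 := by
      have h1 : ∀ i ∈ (Finset.univ : Finset (Fin d)),
          ∑ j, ∑ k, (y j i - y k i)^2 = 0 := by
        rw [← Finset.sum_eq_zero_iff_of_nonneg]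
        · exact hQ
        · intro i _
          apply Finset.sum_nonneg; intro j _
          apply Finset.sum_nonneg; intro k _
          positivity
      intro i j k
      have h2 : ∀ j' ∈ (Finset.univ : Finset (Fin t)),
          ∑ k, (y j' i - y k i)^2 = 0 := by
        rw [← Finset.sum_eq_zero_iff_of_nonneg]
        · exact h1 i (Finset.mem_univ i)
        · intro j' _
          apply Finset.sum_nonneg; intro k _; positivity
      have h3 : ∀ k' ∈ (Finset.univ : Finset (Fin t)),
          (y j i - y k' i)^2 = 0 := by
        rw [← Finset.sum_eq_zero_iff_of_nonneg]
        · exact h2 j (Finset.mem_univ j)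
        · intro k' _; positivity
      exact h3 k (Finset.mem_univ k)
    apply hne
    intro j j'
    funext i
    have := hterm i j j'
    have : y j i - y j' i = 0 := by nlinarith [hterm i j j']
    linarith
end

section
/- In the explicit DUP construction with vertex layers V₁,…,V_{k+1} each equal to [(k+2)·ℓ]^d, with edges (x + i·y, x + (i+1)·y) between Vᵢ and V_{i+1} for all x ∈ [ℓ]^d, y ∈ A, i ∈ [k] (where A is an average-free set of common ℓ₂-norm), the following holds: if z_s = x + y and z_f = x + (k+1)·y' for some y, y' ∈ A, and there is a sequence of vectors y₁,…,y_k ∈ A with z_f = z_s + ∑ᵢ₌₁^k yᵢ, then y = y' and y₁ = ⋯ = y_k = y. -/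
/-- **Unique-shortest-path property of the explicit DUP construction.**
Let `A ⊆ [ℓ]^d` be a set of integer vectors all having the same squared ℓ₂-norm `c`.
If `z_s = x + y` and `z_f = x + (k+1)·y'` for some `y, y' ∈ A`, and there is a sequence of
vectors `y₁,…,y_k ∈ A` with `z_f = z_s + ∑ᵢ₌₁^k yᵢ`, then `y = y'` and `y₁ = ⋯ = y_k = y`. -/
theorem dup_unique_path {d : ℕ} (ℓ k : ℕ) (c : ℤ) (A : Set (Fin d → ℤ))
    (hcoord : ∀ v ∈ A, ∀ i, 1 ≤ v i ∧ v i ≤ (ℓ : ℤ))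
    (hnorm : ∀ v ∈ A, ∑ i, (v i) ^ 2 = c)
    (x y y' : Fin d → ℤ) (ys : Fin k → (Fin d → ℤ))
    (hy : y ∈ A) (hy' : y' ∈ A) (hys : ∀ i, ys i ∈ A)
    (heq : x + ((k : ℤ) + 1) • y' = (x + y) + ∑ i, ys i) :
    y = y' ∧ ∀ i, ys i = y := by
  set v : Fin (k+1) → Fin d → ℤ := Fin.cons y ys with hvdef
  have hvmem : ∀ i, v i ∈ A := by
    intro i
    induction i using Fin.cases with
    | zero => exact hy
    | succ j => exact hys j
  -- sum of the family equals (k+1) • y', coordinatewise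
  have hsum : ∀ t, ∑ i, v i t = ((k : ℤ) + 1) * y' t := by
    intro t
    have h := congrFun heq t
    simp only [Pi.add_apply, Pi.smul_apply, smul_eq_mul, Finset.sum_apply] at h
    have : ∑ i, v i t = y t + ∑ i, ys i t := by
      simp [hvdef, Fin.sum_univ_succ]
    rw [this]; linarith
  have hnv : ∀ i, ∑ t, (v i t) ^ 2 = c := fun i => hnorm _ (hvmem i)
  -- sum of squares of the total vector
  have hsq : ∑ t, (∑ i, v i t) ^ 2 = ((k : ℤ) + 1) ^ 2 * c := by
    have : ∀ t, (∑ i, v i t) ^ 2 = ((k : ℤ) + 1) ^ 2 * (y' t) ^ 2 := by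
      intro t; rw [hsum t]; ring
    simp only [this, ← Finset.mul_sum]
    rw [hnorm _ hy']
  -- expand pairwise differences
  have expand : ∀ i j, ∑ t, (v i t - v j t) ^ 2 = 2 * c - 2 * ∑ t, v i t * v j t := by
    intro i j
    have h1 : ∀ t, (v i t - v j t) ^ 2 = (v i t) ^ 2 + (v j t) ^ 2 - 2 * (v i t * v j t) := by
      intro t; ring
    simp only [h1, Finset.sum_sub_distrib, Finset.sum_add_distrib, ← Finset.mul_sum]
    rw [hnv i, hnv j]; ring
  have hcross : ∑ i : Fin (k+1), ∑ j : Fin (k+1), ∑ t, v i t * v j t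
      = ((k : ℤ) + 1) ^ 2 * c := by
    have h1 : ∀ i : Fin (k+1), ∑ j : Fin (k+1), ∑ t, v i t * v j t
        = ∑ t, v i t * ∑ j, v j t := by
      intro i
      rw [Finset.sum_comm]
      simp [Finset.mul_sum]
    simp only [h1]
    rw [Finset.sum_comm]
    have h2 : ∀ t, ∑ i : Fin (k+1), v i t * ∑ j, v j t = (∑ i, v i t) ^ 2 := by
      intro t; rw [← Finset.sum_mul]; ring
    simp only [h2]
    exact hsq
  have hcard : (Finset.univ : Finset (Fin (k+1))).card = k + 1 := by simp
  have hS : ∑ i : Fin (k+1), ∑ j : Fin (k+1), ∑ t, (v i t - v j t) ^ 2 = 0 := by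
    simp only [expand, Finset.sum_sub_distrib, Finset.sum_const, hcard, nsmul_eq_mul,
      ← Finset.mul_sum, hcross]
    push_cast
    ring
  -- hence all vectors equal
  have hall : ∀ i j : Fin (k+1), v i = v j := by
    have step1 := (Finset.sum_eq_zero_iff_of_nonneg (fun i _ =>
      Finset.sum_nonneg fun j _ => Finset.sum_nonneg fun t _ => sq_nonneg _)).mp hS
    intro i j
    have step2 := (Finset.sum_eq_zero_iff_of_nonneg (fun j _ =>
      Finset.sum_nonneg fun t _ => sq_nonneg _)).mp (step1 i (Finset.mem_univ i))
    have step3 := (Finset.sum_eq_zero_iff_of_nonneg (fun t _ => sq_nonneg _)).mp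
      (step2 j (Finset.mem_univ j))
    funext t
    have := step3 t (Finset.mem_univ t)
    have h0 : v i t - v j t = 0 := by
      exact pow_eq_zero_iff (n := 2) (by norm_num) |>.mp this
    linarith
  -- v 0 = y'
  have hv0 : v 0 = y' := by
    funext t
    have hs := hsum t
    have : ∑ i : Fin (k+1), v i t = ((k : ℤ) + 1) * v 0 t := by
      have : ∀ i : Fin (k+1), v i t = v 0 t := fun i => congrFun (hall i 0) t
      simp only [this, Finset.sum_const, hcard, nsmul_eq_mul]
      push_cast; ring
    rw [this] at hs
    have hk : ((k : ℤ) + 1) ≠ 0 := by positivity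
    exact mul_left_cancel₀ hk hs
  have hyv : y = v 0 := by simp [hvdef]
  refine ⟨hyv.trans hv0, fun i => ?_⟩
  have : ys i = v i.succ := by simp [hvdef]
  rw [this, hall i.succ 0, ← hyv]
end

section
/- Let G consist of two identical vertex-disjoint copies G_L and G_R of a graph H, plus a complete bipartite graph between S_L ⊆ V(G_L) and S_R ⊆ V(G_R), where S_L and S_R are the copies of a common vertex set S ⊆ V(H). Then every maximal independent set M of G contains a maximal independent set of G_L[V(G_L) \ S_L] (the induced subgraph on the non-clique vertices of the left copy) or a maximal independent set of G_R[V(G_R) \ S_R]. -/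
/-- `S` is an independent set of the graph `G`. -/
def IsIndepSet' {V : Type*} (G : SimpleGraph V) (S : Set V) : Prop :=
  ∀ a ∈ S, ∀ b ∈ S, ¬ G.Adj a b

/-- `S` is a maximal independent set of `G`: an independent set that is not a proper
subset of any other independent set. -/
def IsMIS {V : Type*} (G : SimpleGraph V) (S : Set V) : Prop :=
  IsIndepSet' G S ∧ ∀ T : Set V, IsIndepSet' G T → S ⊆ T → T = S

/-- **Two copies joined by a pointer clique.** Let `G` consist of two identical
vertex-disjoint copies (`inl` and `inr`) of a graph `H`, plus a complete bipartite graph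
between `S_L = inl '' S` and `S_R = inr '' S` for a common vertex set `S ⊆ V(H)`. Then
every maximal independent set `M` of `G` contains a maximal independent set of the
induced subgraph of the left copy on its non-clique vertices `H[Sᶜ]`, or one of the
right copy `H[Sᶜ]`. -/
theorem mis_of_two_copies_with_pointer_clique {V : Type*} (H : SimpleGraph V)
    (S : Set V) (M : Set (V ⊕ V))
    (hM : IsMIS (SimpleGraph.fromRel fun x y =>
      (∃ a b, x = Sum.inl a ∧ y = Sum.inl b ∧ H.Adj a b) ∨
      (∃ a b, x = Sum.inr a ∧ y = Sum.inr b ∧ H.Adj a b) ∨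
      (∃ a b, x = Sum.inl a ∧ y = Sum.inr b ∧ a ∈ S ∧ b ∈ S)) M) :
    IsMIS (H.induce Sᶜ) {v : ↥Sᶜ | Sum.inl (v : V) ∈ M} ∨
    IsMIS (H.induce Sᶜ) {v : ↥Sᶜ | Sum.inr (v : V) ∈ M} := by
  set rel : (V ⊕ V) → (V ⊕ V) → Prop := fun x y =>
      (∃ a b, x = Sum.inl a ∧ y = Sum.inl b ∧ H.Adj a b) ∨
      (∃ a b, x = Sum.inr a ∧ y = Sum.inr b ∧ H.Adj a b) ∨
      (∃ a b, x = Sum.inl a ∧ y = Sum.inr b ∧ a ∈ S ∧ b ∈ S) with hrel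
  obtain ⟨hI, hmax⟩ := hM
  set G := SimpleGraph.fromRel rel with hG
  -- if a vertex outside M has no M-neighbor, contradiction with maximality
  have hext : ∀ v ∉ M, ∃ u ∈ M, G.Adj u v := by
    intro v hv
    by_contra hno
    push_neg at hno
    have hind : IsIndepSet' G (insert v M) := by
      intro a ha b hb hab
      rcases ha with rfl | ha
      · rcases hb with rfl | hb
        · exact G.irrefl hab
        · exact hno b hb hab.symm
      · rcases hb with rfl | hb
        · exact hno a ha hab
        · exact hI a ha b hb hab
    have := hmax _ hind (Set.subset_insert v M)
    exact hv (this ▸ Set.mem_insert v M)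
  -- M cannot contain both a left and a right clique vertex
  by_cases hR : ∃ b ∈ S, Sum.inr b ∈ M
  · -- then S_L ∩ M = ∅, and the left restriction is an MIS
    obtain ⟨b, hbS, hbM⟩ := hR
    have hL : ∀ a ∈ S, Sum.inl a ∉ M := by
      intro a haS haM
      refine hI _ haM _ hbM ?_
      refine (SimpleGraph.fromRel_adj ..).2 ⟨by simp, Or.inl ?_⟩
      exact Or.inr (Or.inr ⟨a, b, rfl, rfl, haS, hbS⟩)
    left
    constructor
    · rintro ⟨x, hx⟩ hxM ⟨y, hy⟩ hyM hadj
      have : G.Adj (Sum.inl x) (Sum.inl y) := by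
        refine (SimpleGraph.fromRel_adj ..).2 ⟨by simpa using hadj.ne, Or.inl ?_⟩
        exact Or.inl ⟨x, y, rfl, rfl, hadj⟩
      exact hI _ hxM _ hyM this
    · intro T hT hsub
      apply Set.Subset.antisymm _ hsub
      rintro ⟨v, hv⟩ hvT
      by_contra hvM
      obtain ⟨u, huM, hu⟩ := hext _ hvM
      rw [SimpleGraph.fromRel_adj] at hu
      obtain ⟨hne, h | h⟩ := hu
      · rcases h with ⟨a, c, ha, hc, hac⟩ | ⟨a, c, ha, hc, hac⟩ | ⟨a, c, ha, hc, haS, hcS⟩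
        · obtain rfl := Sum.inl.inj hc
          subst ha
          have haS : a ∉ S := fun h => hL a h huM
          exact hT ⟨a, haS⟩ (hsub huM) ⟨v, hv⟩ hvT hac
        · cases hc
        · cases hc
      · rcases h with ⟨a, c, ha, hc, hac⟩ | ⟨a, c, ha, hc, hac⟩ | ⟨a, c, ha, hc, haS, hcS⟩
        · obtain rfl := Sum.inl.inj ha
          subst hc
          have hcS : c ∉ S := fun h => hL c h huM
          exact hT ⟨v, hv⟩ hvT ⟨c, hcS⟩ (hsub huM) hac
        · cases ha
        · obtain rfl := Sum.inl.inj ha; exact hv haS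
  · push_neg at hR
    right
    constructor
    · rintro ⟨x, hx⟩ hxM ⟨y, hy⟩ hyM hadj
      have : G.Adj (Sum.inr x) (Sum.inr y) := by
        refine (SimpleGraph.fromRel_adj ..).2 ⟨by simpa using hadj.ne, Or.inl ?_⟩
        exact Or.inr (Or.inl ⟨x, y, rfl, rfl, hadj⟩)
      exact hI _ hxM _ hyM this
    · intro T hT hsub
      apply Set.Subset.antisymm _ hsub
      rintro ⟨v, hv⟩ hvT
      by_contra hvM
      obtain ⟨u, huM, hu⟩ := hext _ hvM
      rw [SimpleGraph.fromRel_adj] at hu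
      obtain ⟨hne, h | h⟩ := hu
      · rcases h with ⟨a, c, ha, hc, hac⟩ | ⟨a, c, ha, hc, hac⟩ | ⟨a, c, ha, hc, haS, hcS⟩
        · cases hc
        · obtain rfl := Sum.inr.inj hc
          subst ha
          have haS : a ∉ S := fun h => hR a h huM
          exact hT ⟨a, haS⟩ (hsub huM) ⟨v, hv⟩ hvT hac
        · obtain rfl := Sum.inr.inj hc; exact hv hcS
      · rcases h with ⟨a, c, ha, hc, hac⟩ | ⟨a, c, ha, hc, hac⟩ | ⟨a, c, ha, hc, haS, hcS⟩
        · cases ha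
        · obtain rfl := Sum.inr.inj ha
          subst hc
          have hcS : c ∉ S := fun h => hR c h huM
          exact hT ⟨v, hv⟩ hvT ⟨c, hcS⟩ (hsub huM) hac
        · cases ha
end
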